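/- arXiv:0705.0038 — 2 statements merged into one kernel-verified Lean document; each statement's English description precedes it below -/
import Mathlib

section
/- If G₁ and G₂ are connected finite simple graphs that are relatively prime with respect to the box product, then the automorphism group of G₁ □ G₂ is isomorphic (as a group) to the direct product Aut(G₁) × Aut(G₂). -/
open SimpleGraph

/-- The group of automorphisms of a simple graph, under composition. -/
instance SimpleGraph.autGroup {V : Type*} (G : SimpleGraph V) : Group (G ≃g G) where
  mul f g := g.trans f
  one := Iso.refl
  inv := Iso.symm
  mul_assoc _ _ _ := rfl
  one_mul f := RelIso.ext fun _ => rfl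
  mul_one f := RelIso.ext fun _ => rfl
  inv_mul_cancel f := RelIso.ext fun x => f.toEquiv.symm_apply_apply x

/-- Two graphs are relatively prime with respect to the box product if any
common box-product factor is a single vertex. -/
def SimpleGraph.RelPrime {V₁ V₂ : Type} [Fintype V₁] [Fintype V₂]
    (G : SimpleGraph V₁) (H : SimpleGraph V₂) : Prop :=
  ∀ (A B C : Type) [Fintype A] [Fintype B] [Fintype C]
    (G₁ : SimpleGraph A) (H₁ : SimpleGraph B) (J : SimpleGraph C),
    Nonempty (G ≃g G₁.boxProd J) → Nonempty (H ≃g H₁.boxProd J) →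
    Fintype.card C = 1

/-! In a connected box product the distance is the sum of the distances in the factors, so the
layers `univ ×ˢ {b}` and `{a} ×ˢ univ` are geodesically convex, and convex sets are boxes `P ×ˢ Q`.
Convexity is preserved by automorphisms, so an automorphism `φ` maps the `b`-row onto a box `P ×ˢ Q`
and pulls the column through `φ (a, b)` back to a box `R ×ˢ S`; hence `G ≅ G[P] □ H[Q]` and
`H ≅ G[R] □ H[S]`. The part of the row lying over the column is `R ×ˢ {b}`, which `φ` maps onto
`{c} ×ˢ Q`, so `G[R] ≅ H[Q]` is a common factor of `G` and `H`. Relative primality forces `Q` to be a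
point: `φ` maps rows into rows and, symmetrically, columns into columns, so `φ = σ × τ`. -/

namespace SimpleGraph

variable {α β α' β' : Type*} {G : SimpleGraph α} {H : SimpleGraph β}
  {G' : SimpleGraph α'} {H' : SimpleGraph β'}

theorem Hom.edist_map_le (f : G →g G') (u v : α) : G'.edist (f u) (f v) ≤ G.edist u v := by
  by_cases huv : G.Reachable u v
  · obtain ⟨p, hp⟩ := huv.exists_walk_length_eq_edist
    rw [← hp, ← p.length_map f]
    exact edist_le _
  · simp [edist_eq_top_of_not_reachable huv]

theorem Iso.edist_map (φ : G ≃g G') (u v : α) : G'.edist (φ u) (φ v) = G.edist u v :=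
  le_antisymm (φ.toHom.edist_map_le u v) <| by
    simpa using φ.symm.toHom.edist_map_le (φ u) (φ v)

theorem Iso.dist_map (φ : G ≃g G') (u v : α) : G'.dist (φ u) (φ v) = G.dist u v := by
  rw [dist, dist, φ.edist_map]

theorem dist_boxProd {x y : α × β} (hx : G.Reachable x.1 y.1) (hy : H.Reachable x.2 y.2) :
    (G □ H).dist x y = G.dist x.1 y.1 + H.dist x.2 y.2 := by
  have hxy : (G □ H).Reachable x y := reachable_boxProd.2 ⟨hx, hy⟩
  apply Nat.cast_injective (R := ℕ∞)
  push_cast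
  rw [hxy.coe_dist_eq_edist, hx.coe_dist_eq_edist, hy.coe_dist_eq_edist, edist_boxProd]

theorem boxProd_dist_add_dist_eq_iff (hG : G.Connected) (hH : H.Connected) {x y z : α × β} :
    (G □ H).dist x z + (G □ H).dist z y = (G □ H).dist x y ↔
      G.dist x.1 z.1 + G.dist z.1 y.1 = G.dist x.1 y.1 ∧
        H.dist x.2 z.2 + H.dist z.2 y.2 = H.dist x.2 y.2 := by
  rw [dist_boxProd (hG _ _) (hH _ _), dist_boxProd (hG _ _) (hH _ _),
    dist_boxProd (hG _ _) (hH _ _)]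
  have := hG.dist_triangle (u := x.1) (v := z.1) (w := y.1)
  have := hH.dist_triangle (u := x.2) (v := z.2) (w := y.2)
  omega

-- `dist` is `0` between unreachable vertices, so this is only meaningful for connected graphs.
def IsConvex {V : Type*} (G : SimpleGraph V) (s : Set V) : Prop :=
  ∀ ⦃u⦄, u ∈ s → ∀ ⦃v⦄, v ∈ s → ∀ w, G.dist u w + G.dist w v = G.dist u v → w ∈ s

theorem IsConvex.preimage {s : Set α'} (hs : G'.IsConvex s) (φ : G ≃g G') : G.IsConvex (φ ⁻¹' s) := by
  intro u hu v hv w huwv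
  exact hs hu hv (φ w) (by simpa only [φ.dist_map] using huwv)

theorem isConvex_univ_prod_singleton (hG : G.Connected) (hH : H.Connected) (b : β) :
    (G □ H).IsConvex (Set.univ ×ˢ {b}) := by
  rintro u ⟨-, hu⟩ v ⟨-, hv⟩ w huwv
  have h := ((boxProd_dist_add_dist_eq_iff hG hH).1 huwv).2
  rw [Set.mem_singleton_iff] at hu hv
  rw [hu, hv, dist_self, Nat.add_eq_zero_iff, hH.dist_eq_zero_iff] at h
  exact ⟨trivial, h.1.symm⟩

theorem isConvex_singleton_prod_univ (hG : G.Connected) (hH : H.Connected) (a : α) :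
    (G □ H).IsConvex ({a} ×ˢ Set.univ) := by
  rintro u ⟨hu, -⟩ v ⟨hv, -⟩ w huwv
  have h := ((boxProd_dist_add_dist_eq_iff hG hH).1 huwv).1
  rw [Set.mem_singleton_iff] at hu hv
  rw [hu, hv, dist_self, Nat.add_eq_zero_iff, hG.dist_eq_zero_iff] at h
  exact ⟨h.1.symm, trivial⟩

-- The corner `(x.1, y.2)` lies on a shortest path from `x` to `y`.
theorem IsConvex.eq_image_fst_prod_image_snd (hG : G.Connected) (hH : H.Connected)
    {s : Set (α × β)} (hs : (G □ H).IsConvex s) : s = (Prod.fst '' s) ×ˢ (Prod.snd '' s) := by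
  refine Set.subset_prod.antisymm ?_
  rintro ⟨-, -⟩ ⟨⟨x, hx, rfl⟩, ⟨y, hy, rfl⟩⟩
  exact hs hx hy (x.1, y.2) ((boxProd_dist_add_dist_eq_iff hG hH).2 (by simp))

variable (G H) in
def induceProdIso (s : Set α) (t : Set β) :
    (G □ H).induce (s ×ˢ t) ≃g G.induce s □ H.induce t where
  toFun z := (⟨z.1.1, z.2.1⟩, ⟨z.1.2, z.2.2⟩)
  invFun p := ⟨(p.1, p.2), p.1.2, p.2.2⟩
  left_inv _ := rfl
  right_inv _ := rfl
  map_rel_iff' := by simp [boxProd_adj, Subtype.ext_iff]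

variable (G H) in
def induceProdSingletonIso (s : Set α) (b : β) : (G □ H).induce (s ×ˢ {b}) ≃g G.induce s where
  toFun z := ⟨z.1.1, z.2.1⟩
  invFun a := ⟨(a, b), a.2, rfl⟩
  left_inv := fun ⟨⟨_, _⟩, _, rfl⟩ ↦ rfl
  right_inv _ := rfl
  map_rel_iff' := by simp +contextual [boxProd_adj]

variable (G H) in
def induceSingletonProdIso (a : α) (t : Set β) : (G □ H).induce ({a} ×ˢ t) ≃g H.induce t where
  toFun z := ⟨z.1.2, z.2.2⟩
  invFun b := ⟨(a, b), rfl, b.2⟩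
  left_inv := fun ⟨⟨_, _⟩, rfl, _⟩ ↦ rfl
  right_inv _ := rfl
  map_rel_iff' := by simp +contextual [boxProd_adj]

def IsConvex.induceIsoBoxProd (hG : G.Connected) (hH : H.Connected) {s : Set (α × β)}
    (hs : (G □ H).IsConvex s) :
    (G □ H).induce s ≃g G.induce (Prod.fst '' s) □ H.induce (Prod.snd '' s) :=
  (Iso.refl.induce (hs.eq_image_fst_prod_image_snd hG hH ▸ Set.bijOn_id s)).trans
    (induceProdIso G H _ _)

def boxProdCongr (σ : G ≃g G') (τ : H ≃g H') : (G □ H) ≃g (G' □ H') where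
  toEquiv := σ.toEquiv.prodCongr τ.toEquiv
  map_rel_iff' := by simp [boxProd_adj, Iso.map_adj_iff]

theorem boxProdCongr_injective [Nonempty α] [Nonempty β] :
    Function.Injective fun p : (G ≃g G') × (H ≃g H') ↦ boxProdCongr p.1 p.2 := by
  rintro ⟨σ, τ⟩ ⟨σ', τ'⟩ h
  obtain ⟨a⟩ := ‹Nonempty α›
  obtain ⟨b⟩ := ‹Nonempty β›
  refine Prod.ext (RelIso.ext fun a' ↦ ?_) (RelIso.ext fun b' ↦ ?_)
  · exact congrArg Prod.fst (DFunLike.congr_fun h (a', b))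
  · exact congrArg Prod.snd (DFunLike.congr_fun h (a, b'))

theorem Iso.exists_boxProdCongr_eq [Nonempty α] [Nonempty β] (φ : (G □ H) ≃g (G' □ H'))
    {f : α → α'} {g : β → β'} (hφ : ∀ x, φ x = (f x.1, g x.2)) :
    ∃ (σ : G ≃g G') (τ : H ≃g H'), boxProdCongr σ τ = φ := by
  have hfg : f.Bijective ∧ g.Bijective := by
    rw [← Prod.map_bijective, show Prod.map f g = φ from funext fun x ↦ (hφ x).symm]
    exact φ.bijective
  obtain ⟨a⟩ := ‹Nonempty α›
  obtain ⟨b⟩ := ‹Nonempty β›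
  refine ⟨⟨Equiv.ofBijective f hfg.1, fun {a₁ a₂} ↦ ?_⟩, ⟨Equiv.ofBijective g hfg.2, fun {b₁ b₂} ↦ ?_⟩,
    RelIso.ext fun x ↦ (hφ x).symm⟩
  · calc G'.Adj (f a₁) (f a₂) ↔ (G' □ H').Adj (f a₁, g b) (f a₂, g b) := boxProd_adj_left.symm
      _ ↔ (G' □ H').Adj (φ (a₁, b)) (φ (a₂, b)) := by rw [hφ, hφ]
      _ ↔ G.Adj a₁ a₂ := φ.map_adj_iff.trans boxProd_adj_left
  · calc H'.Adj (g b₁) (g b₂) ↔ (G' □ H').Adj (f a, g b₁) (f a, g b₂) := boxProd_adj_right.symm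
      _ ↔ (G' □ H').Adj (φ (a, b₁)) (φ (a, b₂)) := by rw [hφ, hφ]
      _ ↔ H.Adj b₁ b₂ := φ.map_adj_iff.trans boxProd_adj_right

-- With `c` the first coordinate of `φ (a, b)`: the `b`-row meets the preimage of the `c`-column
-- exactly in the preimage of the `c`-column of the image of the `b`-row.
theorem Iso.preimage_singleton_prod_image_snd (φ : (G □ H) ≃g (G □ H)) (hG : G.Connected)
    (hH : H.Connected) (a : α) (b : β) :
    φ ⁻¹' ({(φ (a, b)).1} ×ˢ (Prod.snd '' (φ.symm ⁻¹' (Set.univ ×ˢ {b})))) =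
      (Prod.fst '' (φ ⁻¹' ({(φ (a, b)).1} ×ˢ Set.univ))) ×ˢ {b} := by
  set c := (φ (a, b)).1
  set L := φ.symm ⁻¹' (Set.univ ×ˢ {b})
  set N := φ ⁻¹' ({c} ×ˢ Set.univ)
  have hL : L = (Prod.fst '' L) ×ˢ (Prod.snd '' L) :=
    ((isConvex_univ_prod_singleton hG hH b).preimage φ.symm).eq_image_fst_prod_image_snd hG hH
  have hN : N = (Prod.fst '' N) ×ˢ (Prod.snd '' N) :=
    ((isConvex_singleton_prod_univ hG hH c).preimage φ).eq_image_fst_prod_image_snd hG hH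
  have habN : (a, b) ∈ N := ⟨rfl, trivial⟩
  have habL : φ (a, b) ∈ L := by simp [L]
  ext z
  simp only [Set.mem_preimage, Set.mem_prod, Set.mem_singleton_iff]
  constructor
  · rintro ⟨hz₁, hz₂⟩
    have hzL : φ z ∈ L := by
      rw [hL]
      exact ⟨⟨_, habL, hz₁.symm⟩, hz₂⟩
    exact ⟨⟨z, ⟨hz₁, trivial⟩, rfl⟩, by simpa [L] using hzL⟩
  · rintro ⟨hz₁, hz₂⟩
    have hzN : z ∈ N := by
      rw [hN]
      exact ⟨hz₁, _, habN, hz₂.symm⟩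
    exact ⟨hzN.1, φ z, by simp [L, hz₂], rfl⟩

section RelPrime

variable {V₁ V₂ : Type} [Fintype V₁] [Fintype V₂] {G : SimpleGraph V₁} {H : SimpleGraph V₂}

theorem RelPrime.symm (h : G.RelPrime H) : H.RelPrime G :=
  fun A B C _ _ _ G₁ H₁ J hH hG ↦ h B A C H₁ G₁ J hG hH

theorem RelPrime.snd_apply_eq (hGH : G.RelPrime H) (hG : G.Connected) (hH : H.Connected)
    (φ : (G □ H) ≃g (G □ H)) (a a' : V₁) (b : V₂) : (φ (a, b)).2 = (φ (a', b)).2 := by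
  classical
  set c := (φ (a, b)).1
  set L := φ.symm ⁻¹' (Set.univ ×ˢ {b})
  set N := φ ⁻¹' ({c} ×ˢ Set.univ)
  have hLconv : (G □ H).IsConvex L := (isConvex_univ_prod_singleton hG hH b).preimage φ.symm
  have hNconv : (G □ H).IsConvex N := (isConvex_singleton_prod_univ hG hH c).preimage φ
  have hRQ : φ ⁻¹' ({c} ×ˢ (Prod.snd '' L)) = (Prod.fst '' N) ×ˢ {b} :=
    φ.preimage_singleton_prod_image_snd hG hH a b
  let eG : G ≃g G.induce (Prod.fst '' L) □ H.induce (Prod.snd '' L) :=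
    (induceUnivIso G).symm.trans <| (induceProdSingletonIso G H _ b).symm.trans <|
      (φ.symm.induce φ.symm.bijective.bijOn_preimage).symm.trans (hLconv.induceIsoBoxProd hG hH)
  let eH : H ≃g G.induce (Prod.fst '' N) □ H.induce (Prod.snd '' N) :=
    (induceUnivIso H).symm.trans <| (induceSingletonProdIso G H c _).symm.trans <|
      (φ.induce φ.bijective.bijOn_preimage).symm.trans (hNconv.induceIsoBoxProd hG hH)
  let eJ : G.induce (Prod.fst '' N) ≃g H.induce (Prod.snd '' L) :=
    (induceProdSingletonIso G H _ b).symm.trans <|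
      (φ.induce (hRQ ▸ φ.bijective.bijOn_preimage)).trans (induceSingletonProdIso G H c _)
  have hJ := hGH _ _ _ _ _ _ ⟨eG⟩ ⟨eH.trans ((boxProdComm _ _).trans (boxProdCongr .refl eJ))⟩
  have hrow (a : V₁) : (φ (a, b)).2 ∈ Prod.snd '' L := ⟨φ (a, b), by simp [L], rfl⟩
  exact congrArg Subtype.val (Fintype.card_le_one_iff.1 hJ.le ⟨_, hrow a⟩ ⟨_, hrow a'⟩)

theorem RelPrime.fst_apply_eq (hGH : G.RelPrime H) (hG : G.Connected) (hH : H.Connected)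
    (φ : (G □ H) ≃g (G □ H)) (a : V₁) (b b' : V₂) : (φ (a, b)).1 = (φ (a, b')).1 :=
  hGH.symm.snd_apply_eq hH hG ((boxProdComm H G).trans (φ.trans (boxProdComm G H))) b b' a

end RelPrime

variable (G H) in
def boxProdCongrHom : (G ≃g G) × (H ≃g H) →* ((G □ H) ≃g (G □ H)) where
  toFun p := boxProdCongr p.1 p.2
  map_one' := rfl
  map_mul' _ _ := rfl

end SimpleGraph

/-- (Sabidussi) If `G₁` and `G₂` are connected finite simple graphs that are
relatively prime with respect to the box product, then the automorphism group of
`G₁ □ G₂` is isomorphic to the direct product `Aut(G₁) × Aut(G₂)`. -/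
theorem aut_boxProd_of_relPrime {V₁ V₂ : Type} [Fintype V₁] [Fintype V₂]
    (G₁ : SimpleGraph V₁) (G₂ : SimpleGraph V₂)
    (h₁ : G₁.Connected) (h₂ : G₂.Connected) (h : G₁.RelPrime G₂) :
    Nonempty ((G₁.boxProd G₂ ≃g G₁.boxProd G₂) ≃* (G₁ ≃g G₁) × (G₂ ≃g G₂)) := by
  have := h₁.nonempty
  have := h₂.nonempty
  refine ⟨(MulEquiv.ofBijective (boxProdCongrHom G₁ G₂) ⟨boxProdCongr_injective, fun φ ↦ ?_⟩).symm⟩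
  inhabit V₁
  inhabit V₂
  obtain ⟨σ, τ, hστ⟩ := φ.exists_boxProdCongr_eq (f := fun a ↦ (φ (a, default)).1)
    (g := fun b ↦ (φ (default, b)).2)
    fun x ↦ Prod.ext (h.fst_apply_eq h₁ h₂ φ _ _ _) (h.snd_apply_eq h₁ h₂ φ _ _ _)
  exact ⟨(σ, τ), hστ⟩
end

section
/- Let p and q be distinct prime numbers. Then the number of isomorphism classes of prime graphs on p·q vertices equals c̃_{pq} − c̃_p · c̃_q, where c̃_n denotes the number of isomorphism classes of connected simple graphs on n vertices. -/
/-!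
Distances add in a box product of connected graphs, so for an isomorphism
`φ : A □ B ≃g C □ D` the preimage of a fibre `{c} × δ` is closed under
`(u, v) ↦ (u.1, v.2)`, i.e. it is a product set. If `|B| = |D| = q` is prime and
`|A| < q`, a product set of size `q` inside `α × β` must be a whole fibre `{a} × β`;
hence `φ` permutes fibres, and this yields `A ≃g C` and `B ≃g D`. For distinct
primes `p, q` one of the two orders applies, so a connected non-prime graph on `pq`
vertices is `A □ B` for connected `A, B` on `p` and `q` vertices, unique up to
isomorphism of the factors: the non-prime connected classes are in bijection with
pairs of connected classes.
-/

open SimpleGraph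

/-- A finite simple graph is prime with respect to the box product. -/
def SimpleGraph.IsPrime {V : Type} [Fintype V] (G : SimpleGraph V) : Prop :=
  G.Connected ∧ 2 ≤ Fintype.card V ∧
    ∀ (V₁ V₂ : Type) [Fintype V₁] [Fintype V₂]
      (H₁ : SimpleGraph V₁) (H₂ : SimpleGraph V₂),
      Nonempty (G ≃g H₁.boxProd H₂) →
      Fintype.card V₁ = 1 ∨ Fintype.card V₂ = 1

/-- The number of isomorphism classes of connected simple graphs on `n` vertices. -/
noncomputable def numConnectedClasses (n : ℕ) : ℕ :=
  Nat.card
    (Quot fun G H : {G : SimpleGraph (Fin n) // G.Connected} => Nonempty (G.1 ≃g H.1))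

/-- The number of isomorphism classes of prime graphs on `m` vertices. -/
noncomputable def numPrimeClasses (m : ℕ) : ℕ :=
  Nat.card
    (Quot fun G H : {G : SimpleGraph (Fin m) // G.IsPrime} => Nonempty (G.1 ≃g H.1))

theorem Finset.image_fst_product_image_snd_eq {α β : Type*} [DecidableEq α] [DecidableEq β]
    {s : Finset (α × β)} (hs : ∀ u ∈ s, ∀ v ∈ s, (u.1, v.2) ∈ s) :
    s.image Prod.fst ×ˢ s.image Prod.snd = s := by
  refine subset_antisymm (fun ⟨a, b⟩ hx => ?_) subset_product
  obtain ⟨⟨u, hu, rfl⟩, ⟨v, hv, rfl⟩⟩ := by simpa only [mem_product, mem_image] using hx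
  exact hs u hu v hv

theorem Nat.eq_and_eq_of_mul_eq_mul_of_dvd {m n p q : ℕ} (hp : 0 < p) (hq : q.Prime)
    (h : m * n = p * q) (hpm : p ∣ m) (hn : n ≠ 1) : m = p ∧ n = q := by
  obtain ⟨k, rfl⟩ := hpm
  have hkn : k * n = q := Nat.eq_of_mul_eq_mul_left hp (by rw [← h, mul_assoc])
  obtain ⟨-, rfl⟩ | ⟨-, rfl⟩ := Nat.prime_mul_iff.mp (hkn ▸ hq)
  · exact absurd rfl hn
  · simpa using hkn

theorem Setoid.card_quotient_eq_of_rel_iff {α β : Type*} {s : Setoid α} {t : Setoid β}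
    (f : α → β) (hf : ∀ a b, s a b ↔ t (f a) (f b)) (hsurj : ∀ b, ∃ a, t (f a) b) :
    Nat.card (Quotient s) = Nat.card (Quotient t) := by
  refine Nat.card_congr (Equiv.ofBijective (Quotient.map f fun a b => (hf a b).mp) ⟨?_, ?_⟩)
  · intro x y
    induction x, y using Quotient.inductionOn₂ with
    | h a b => exact fun h => Quotient.sound ((hf a b).mpr (Quotient.exact h))
  · intro y
    induction y using Quotient.inductionOn with
    | h b =>
      obtain ⟨a, ha⟩ := hsurj b
      exact ⟨⟦a⟧, Quotient.sound ha⟩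

namespace SimpleGraph

variable {α β γ δ : Type*} {A : SimpleGraph α} {B : SimpleGraph β} {C : SimpleGraph γ}
  {D : SimpleGraph δ}

theorem Reachable.dist_map_le {u v : α} (f : A →g C) (h : A.Reachable u v) :
    C.dist (f u) (f v) ≤ A.dist u v := by
  obtain ⟨w, hw⟩ := h.exists_walk_length_eq_dist
  exact (dist_le (w.map f)).trans_eq ((w.length_map f).trans hw)

theorem Iso.dist_eq (e : A ≃g C) (u v : α) : C.dist (e u) (e v) = A.dist u v := by
  by_cases h : A.Reachable u v
  · refine le_antisymm (h.dist_map_le e.toHom) ?_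
    simpa using (e.reachable_iff.mpr h).dist_map_le e.symm.toHom
  · rw [dist_eq_zero_of_not_reachable h,
      dist_eq_zero_of_not_reachable (e.reachable_iff.not.mpr h)]

def Iso.boxProd (e₁ : A ≃g C) (e₂ : B ≃g D) : (A □ B) ≃g (C □ D) where
  toEquiv := e₁.toEquiv.prodCongr e₂.toEquiv
  map_rel_iff' {x y} := by
    simp only [Equiv.prodCongr_apply, Prod.map, boxProd_adj, RelIso.coe_fn_toEquiv,
      Iso.map_adj_iff, EmbeddingLike.apply_eq_iff_eq]

theorem dist_boxProd_s10 {x y : α × β} (hA : A.Reachable x.1 y.1) (hB : B.Reachable x.2 y.2) :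
    (A □ B).dist x y = A.dist x.1 y.1 + B.dist x.2 y.2 := by
  have hAB : (A □ B).Reachable x y := reachable_boxProd.mpr ⟨hA, hB⟩
  have h := edist_boxProd (G := A) (H := B) x y
  rw [← hAB.coe_dist_eq_edist, ← hA.coe_dist_eq_edist, ← hB.coe_dist_eq_edist] at h
  exact_mod_cast h

theorem fst_eq_of_dist_add_dist_eq (hA : A.Connected) (hB : B.Connected) {x y z : α × β}
    (hxy : x.1 = y.1) (h : (A □ B).dist x z + (A □ B).dist z y = (A □ B).dist x y) :
    z.1 = x.1 := by
  simp only [dist_boxProd_s10 (hA _ _) (hB _ _), hxy, dist_self] at h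
  have := hB.dist_triangle (u := x.2) (v := z.2) (w := y.2)
  have hxz : A.dist y.1 z.1 = 0 := by omega
  rw [hxy]
  exact ((hA.dist_eq_zero_iff).mp hxz).symm

theorem fst_iso_mk_eq_of_fst_iso_eq (hA : A.Connected) (hB : B.Connected) (hC : C.Connected)
    (hD : D.Connected) (φ : (A □ B) ≃g (C □ D)) {u v : α × β} (h : (φ u).1 = (φ v).1) :
    (φ (u.1, v.2)).1 = (φ u).1 := by
  refine fst_eq_of_dist_add_dist_eq hC hD h ?_
  simp only [φ.dist_eq, dist_boxProd_s10 (hA _ _) (hB _ _), dist_self]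
  ring

open Fintype in
theorem exists_fst_iso_eq_iff [Fintype α] [Fintype β] [Fintype δ] (hA : A.Connected)
    (hB : B.Connected) (hC : C.Connected) (hD : D.Connected) (φ : (A □ B) ≃g (C □ D))
    (hδ : (card δ).Prime) (hβδ : card β = card δ) (hαδ : card α < card δ) (c : γ) :
    ∃ a, ∀ u, (φ u).1 = c ↔ u.1 = a := by
  classical
  set T := Finset.univ.filter fun u => (φ u).1 = c
  have hT : T = ({c} ×ˢ Finset.univ).map φ.symm.toEquiv.toEmbedding := by
    ext u
    simp only [T, Finset.mem_filter, Finset.mem_univ, true_and, Finset.mem_map_equiv,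
      Finset.mem_product, Finset.mem_singleton, and_true]
    rfl
  have hTcard : T.card = card δ := by simp [hT]
  have hbox : ∀ u ∈ T, ∀ v ∈ T, (u.1, v.2) ∈ T := by
    intro u hu v hv
    simp only [T, Finset.mem_filter, Finset.mem_univ, true_and] at hu hv ⊢
    rw [fst_iso_mk_eq_of_fst_iso_eq hA hB hC hD φ (hu.trans hv.symm), hu]
  have hprod := congrArg Finset.card (Finset.image_fst_product_image_snd_eq hbox)
  rw [Finset.card_product, hTcard] at hprod
  rcases Nat.prime_mul_iff.mp (hprod ▸ hδ) with ⟨-, hY⟩ | ⟨-, hX⟩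
  · rw [hY, mul_one] at hprod
    exact absurd (hprod ▸ Finset.card_le_univ _) hαδ.not_ge
  obtain ⟨a, ha⟩ := Finset.card_eq_one.mp hX
  have hTa : T = {a} ×ˢ Finset.univ := by
    refine Finset.eq_of_subset_of_card_le (fun u hu => ?_) (by simp [hTcard, hβδ])
    have : u.1 ∈ T.image Prod.fst := Finset.mem_image_of_mem _ hu
    simpa only [ha, Finset.mem_singleton, Finset.mem_product, Finset.mem_univ, and_true]
      using this
  refine ⟨a, fun u => ?_⟩
  simpa only [T, Finset.mem_filter, Finset.mem_univ, true_and, Finset.mem_product,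
    Finset.mem_singleton, and_true] using Finset.ext_iff.mp hTa u

theorem nonempty_iso_left_of_fst_iso_eq_iff [Nonempty β] [Nonempty δ] (φ : (A □ B) ≃g (C □ D))
    (hφ : ∀ u v, (φ u).1 = (φ v).1 ↔ u.1 = v.1) : Nonempty (A ≃g C) := by
  obtain ⟨b₀⟩ := ‹Nonempty β›
  obtain ⟨d₀⟩ := ‹Nonempty δ›
  let f a := (φ (a, b₀)).1
  have hf : Function.Bijective f := by
    refine ⟨fun a a' h => (hφ _ _).mp h, fun c => ⟨(φ.symm (c, d₀)).1, ?_⟩⟩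
    simpa using (hφ ((φ.symm (c, d₀)).1, b₀) (φ.symm (c, d₀))).mpr rfl
  refine ⟨⟨Equiv.ofBijective f hf, fun {a a'} => ?_⟩⟩
  change C.Adj (f a) (f a') ↔ A.Adj a a'
  constructor
  · intro h
    -- the edge from `φ (a, b₀)` along `C` comes from an edge between the columns of `a` and `a'`
    set y := φ.symm (f a', (φ (a, b₀)).2)
    have hy : φ y = (f a', (φ (a, b₀)).2) := by simp [y]
    have hy₁ : y.1 = a' := (hφ y (a', b₀)).mp (by rw [hy])
    have hadj : (C □ D).Adj (φ (a, b₀)) (φ y) := by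
      rw [hy]
      exact boxProd_adj.mpr (Or.inl ⟨h, rfl⟩)
    rcases boxProd_adj.mp (φ.map_adj_iff.mp hadj) with ⟨ha, -⟩ | ⟨-, ha⟩
    · rwa [← hy₁]
    · exact absurd (congrArg f (ha.trans hy₁)) h.ne
  · intro h
    rcases boxProd_adj.mp (φ.map_adj_iff.mpr (boxProd_adj_left.mpr h :
      (A □ B).Adj (a, b₀) (a', b₀))) with ⟨hc, -⟩ | ⟨-, heq⟩
    · exact hc
    · exact absurd ((hφ _ _).mp heq) h.ne

theorem nonempty_iso_right_of_fst_iso_eq_iff [Nonempty α] [Nonempty β] (φ : (A □ B) ≃g (C □ D))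
    (hφ : ∀ u v, (φ u).1 = (φ v).1 ↔ u.1 = v.1) : Nonempty (B ≃g D) := by
  obtain ⟨a₀⟩ := ‹Nonempty α›
  obtain ⟨b₀⟩ := ‹Nonempty β›
  let g b := (φ (a₀, b)).2
  have hg : Function.Bijective g := by
    refine ⟨fun b b' h => ?_, fun d => ?_⟩
    · have := φ.injective (Prod.ext ((hφ (a₀, b) (a₀, b')).mpr rfl) h)
      exact (Prod.mk.inj this).2
    · set y := φ.symm ((φ (a₀, b₀)).1, d)
      have hy₁ : y.1 = a₀ := (hφ y (a₀, b₀)).mp (by simp [y])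
      refine ⟨y.2, ?_⟩
      change (φ (a₀, y.2)).2 = d
      rw [← hy₁]
      simp [y]
  refine ⟨⟨Equiv.ofBijective g hg, fun {b b'} => ?_⟩⟩
  change D.Adj (g b) (g b') ↔ B.Adj b b'
  have hfst : (φ (a₀, b)).1 = (φ (a₀, b')).1 := (hφ _ _).mpr rfl
  rw [← boxProd_adj_right (G := A) (H := B) (a := a₀), ← φ.map_adj_iff, boxProd_adj, hfst]
  simp [g]

open Fintype in
theorem nonempty_iso_of_boxProd_iso_of_card_lt [Fintype α] [Fintype β] [Fintype δ] [Nonempty α]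
    (hA : A.Connected) (hB : B.Connected) (hC : C.Connected) (hD : D.Connected)
    (φ : (A □ B) ≃g (C □ D)) (hδ : (card δ).Prime) (hβδ : card β = card δ)
    (hαδ : card α < card δ) : Nonempty (A ≃g C) ∧ Nonempty (B ≃g D) := by
  have hφ : ∀ u v, (φ u).1 = (φ v).1 ↔ u.1 = v.1 := by
    intro u v
    obtain ⟨a, ha⟩ := exists_fst_iso_eq_iff hA hB hC hD φ hδ hβδ hαδ (φ u).1
    rw [eq_comm, ha v, (ha u).mp rfl, eq_comm]
  have : Nonempty δ := card_pos_iff.mp hδ.pos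
  have : Nonempty β := card_pos_iff.mp (hβδ ▸ hδ.pos)
  exact ⟨nonempty_iso_left_of_fst_iso_eq_iff φ hφ, nonempty_iso_right_of_fst_iso_eq_iff φ hφ⟩

open Fintype in
theorem nonempty_iso_of_boxProd_iso [Fintype α] [Fintype β] [Fintype γ] [Fintype δ] {p q : ℕ}
    (hp : p.Prime) (hq : q.Prime) (hpq : p ≠ q) (hα : card α = p) (hβ : card β = q)
    (hγ : card γ = p) (hδ : card δ = q) (hA : A.Connected) (hB : B.Connected)
    (hC : C.Connected) (hD : D.Connected) (φ : (A □ B) ≃g (C □ D)) :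
    Nonempty (A ≃g C) ∧ Nonempty (B ≃g D) := by
  rcases hpq.lt_or_gt with h | h
  · have : Nonempty α := card_pos_iff.mp (hα ▸ hp.pos)
    exact nonempty_iso_of_boxProd_iso_of_card_lt hA hB hC hD φ (hδ ▸ hq) (hβ.trans hδ.symm)
      (by omega)
  · have : Nonempty β := card_pos_iff.mp (hβ ▸ hq.pos)
    exact (nonempty_iso_of_boxProd_iso_of_card_lt hB hA hD hC
      ((boxProdComm B A).trans (φ.trans (boxProdComm C D))) (hγ ▸ hp) (hα.trans hγ.symm)
      (by omega)).symm

variable {V : Type*}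

def isoSetoid (V : Type*) : Setoid (SimpleGraph V) where
  r G H := Nonempty (G ≃g H)
  iseqv := ⟨fun _ => ⟨Iso.refl⟩, fun ⟨e⟩ => ⟨e.symm⟩, fun ⟨e⟩ ⟨f⟩ => ⟨e.trans f⟩⟩

abbrev IsoClasses (P : SimpleGraph V → Prop) : Type _ :=
  Quotient ((isoSetoid V).comap ((↑) : {G // P G} → SimpleGraph V))

theorem card_isoClasses_eq_add [Finite V] {P Q : SimpleGraph V → Prop}
    (hQ : ∀ {G H : SimpleGraph V}, (G ≃g H) → Q G → Q H) :
    Nat.card (IsoClasses P) =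
      Nat.card (IsoClasses fun G => P G ∧ Q G) + Nat.card (IsoClasses fun G => P G ∧ ¬Q G) := by
  classical
  let Q' : IsoClasses P → Prop :=
    Quotient.lift (fun G => Q G.1) fun _ _ ⟨e⟩ => propext ⟨hQ e, hQ e.symm⟩
  have hcard (R : SimpleGraph V → Prop) (r : IsoClasses P → Prop) (hr : ∀ G, R G.1 ↔ r ⟦G⟧) :
      Nat.card {c // r c} = Nat.card (IsoClasses fun G => P G ∧ R G) :=
    Nat.card_congr ((Equiv.subtypeQuotientEquivQuotientSubtype (fun G => R G.1) r
      (s₂ := (isoSetoid V).comap fun G => G.1.1) hr fun _ _ => Iff.rfl).trans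
        (Quotient.congr (Equiv.subtypeSubtypeEquivSubtypeInter P R) fun _ _ => Iff.rfl))
  rw [← Nat.card_congr (Equiv.sumCompl Q'), Nat.card_sum, hcard Q Q' fun _ => Iff.rfl,
    hcard (¬Q ·) (¬Q' ·) fun _ => Iff.rfl]

theorem IsPrime.of_iso {V W : Type} [Fintype V] [Fintype W] {G : SimpleGraph V}
    {H : SimpleGraph W} (hG : G.IsPrime) (e : G ≃g H) : H.IsPrime :=
  ⟨e.connected_iff.mp hG.1, Fintype.card_congr e.toEquiv ▸ hG.2.1,
    fun V₁ V₂ _ _ H₁ H₂ ⟨ψ⟩ => hG.2.2 V₁ V₂ H₁ H₂ ⟨e.trans ψ⟩⟩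

open Fintype in
theorem exists_iso_boxProd_fin {W V₁ V₂ : Type*} [Fintype V₁] [Fintype V₂] {p q : ℕ}
    {G : SimpleGraph W} {H₁ : SimpleGraph V₁} {H₂ : SimpleGraph V₂} (hG : G.Connected)
    (ψ : G ≃g (H₁ □ H₂)) (h₁ : card V₁ = p) (h₂ : card V₂ = q) :
    ∃ (A : SimpleGraph (Fin p)) (B : SimpleGraph (Fin q)),
      A.Connected ∧ B.Connected ∧ Nonempty (G ≃g (A □ B)) := by
  let e₁ := Iso.map (equivFinOfCardEq h₁) H₁
  let e₂ := Iso.map (equivFinOfCardEq h₂) H₂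
  have hH := ψ.connected_iff.mp hG
  exact ⟨_, _, e₁.connected_iff.mp hH.ofBoxProdLeft, e₂.connected_iff.mp hH.ofBoxProdRight,
    ⟨ψ.trans (e₁.boxProd e₂)⟩⟩

open Fintype in
theorem exists_iso_boxProd_of_not_isPrime {p q : ℕ} (hp : p.Prime) (hq : q.Prime)
    {G : SimpleGraph (Fin (p * q))} (hG : G.Connected) (hG' : ¬G.IsPrime) :
    ∃ (A : SimpleGraph (Fin p)) (B : SimpleGraph (Fin q)),
      A.Connected ∧ B.Connected ∧ Nonempty (G ≃g (A □ B)) := by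
  have h2 : 2 ≤ card (Fin (p * q)) := by
    rw [card_fin]
    nlinarith [hp.two_le, hq.two_le]
  simp only [IsPrime, hG, h2, true_and, not_forall, not_or] at hG'
  obtain ⟨V₁, V₂, _, _, H₁, H₂, ⟨ψ⟩, h₁, h₂⟩ := hG'
  have hcard : card V₁ * card V₂ = p * q := by
    rw [← card_prod, ← card_fin (p * q)]
    exact (card_congr ψ.toEquiv).symm
  rcases hp.dvd_mul.mp (hcard ▸ dvd_mul_right p q) with hpd | hpd
  · obtain ⟨hp₁, hq₂⟩ := Nat.eq_and_eq_of_mul_eq_mul_of_dvd hp.pos hq hcard hpd h₂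
    exact exists_iso_boxProd_fin hG ψ hp₁ hq₂
  · obtain ⟨hp₂, hq₁⟩ :=
      Nat.eq_and_eq_of_mul_eq_mul_of_dvd hp.pos hq (by rw [mul_comm, hcard]) hpd h₁
    exact exists_iso_boxProd_fin hG (ψ.trans (boxProdComm H₁ H₂)) hp₂ hq₁

theorem card_isoClasses_connected_not_isPrime {p q : ℕ} (hp : p.Prime) (hq : q.Prime)
    (hpq : p ≠ q) :
    Nat.card (IsoClasses fun G : SimpleGraph (Fin (p * q)) => G.Connected ∧ ¬G.IsPrime) =
      Nat.card (IsoClasses (@Connected (Fin p))) * Nat.card (IsoClasses (@Connected (Fin q))) := by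
  let e := (finProdFinEquiv : Fin p × Fin q ≃ Fin (p * q))
  let f (x : {A : SimpleGraph (Fin p) // A.Connected} × {B : SimpleGraph (Fin q) // B.Connected}) :
      {G : SimpleGraph (Fin (p * q)) // G.Connected ∧ ¬G.IsPrime} :=
    ⟨(x.1.1 □ x.2.1).map e.toEmbedding,
      (Iso.map e _).connected_iff.mp (connected_boxProd.mpr ⟨x.1.2, x.2.2⟩),
      fun h => by
        rcases h.2.2 _ _ x.1.1 x.2.1 ⟨(Iso.map e _).symm⟩ with h | h
        · exact hp.ne_one (by simpa using h)
        · exact hq.ne_one (by simpa using h)⟩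
  rw [← Nat.card_prod, Nat.card_congr (Setoid.prodQuotientEquiv _ _)]
  refine (Setoid.card_quotient_eq_of_rel_iff (t := (isoSetoid _).comap Subtype.val) f
    (fun x y => ⟨?_, ?_⟩) ?_).symm
  · rintro ⟨⟨e₁⟩, ⟨e₂⟩⟩
    exact ⟨(Iso.map e _).symm.trans ((e₁.boxProd e₂).trans (Iso.map e _))⟩
  · rintro ⟨φ⟩
    exact nonempty_iso_of_boxProd_iso hp hq hpq (Fintype.card_fin p) (Fintype.card_fin q)
      (Fintype.card_fin p) (Fintype.card_fin q) x.1.2 x.2.2 y.1.2 y.2.2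
      ((Iso.map e _).trans (φ.trans (Iso.map e _).symm))
  · rintro ⟨G, hG, hG'⟩
    obtain ⟨A, B, hA, hB, ⟨ψ⟩⟩ := exists_iso_boxProd_of_not_isPrime hp hq hG hG'
    exact ⟨(⟨A, hA⟩, ⟨B, hB⟩), ⟨(Iso.map e _).symm.trans ψ.symm⟩⟩

end SimpleGraph

/-- For distinct primes `p` and `q`, the number of unlabeled prime graphs on
`p·q` vertices equals `c̃_{pq} − c̃_p · c̃_q`. -/
theorem numPrimeClasses_mul_of_distinct_primes (p q : ℕ)
    (hp : Nat.Prime p) (hq : Nat.Prime q) (hpq : p ≠ q) :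
    (numPrimeClasses (p * q) : ℤ) =
      numConnectedClasses (p * q) - numConnectedClasses p * numConnectedClasses q := by
  have hsplit := card_isoClasses_eq_add (P := @Connected (Fin (p * q)))
    fun e hG => IsPrime.of_iso hG e
  have hprime : Nat.card (IsoClasses fun G : SimpleGraph (Fin (p * q)) => G.Connected ∧ G.IsPrime)
      = Nat.card (IsoClasses (@IsPrime (Fin (p * q)) _)) :=
    Nat.card_congr (Quotient.congr (Equiv.subtypeEquivRight fun _ =>
      and_iff_right_of_imp fun h => h.1) fun _ _ => Iff.rfl)
  rw [hprime, card_isoClasses_connected_not_isPrime hp hq hpq] at hsplit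
  change numConnectedClasses (p * q) =
    numPrimeClasses (p * q) + numConnectedClasses p * numConnectedClasses q at hsplit
  omega
end
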